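/- Assume positivity: 0 < p(X) < 1 μ-a.s. where p∘X is a version of E_μ[1_{S=1} | σ(X)], and define the true selection-model offset a(x) = ln((1 − p(x))/p(x)) − ln c(x). Then the generalized method of moments population equation holds: E_μ[ 1_{S=1} · e^{a(X) + η q(Y)} ] = μ(S = 0), equivalently E_μ[ 1_{S=1} e^{a(X) + η q(Y)} / μ(S=0) − 1 ] = 0. -/

import Mathlib

open MeasureTheory ProbabilityTheory Real

/-!
Write `T = {S = 1}`, `f = e^{a(X)}` and `r = (1 - p(X)) / p(X)`. The offset is built so that
`e^{a} c = (1 - p) / p`, so pulling the `σ(X)`-measurable factor `f` out of `E_{μ₁}[· | σ(X)]` gives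
`E_{μ₁}[f e^{η q(Y)}] = E_{μ₁}[f c(X)] = E_{μ₁}[r]`, i.e. `E_μ[1_T f e^{η q(Y)}] = E_μ[1_T r]`.
Pulling `r` out of `E_μ[1_T | σ(X)] = p(X)` then gives `E_μ[r p(X)] = E_μ[1 - p(X)] = μ(S = 0)`.
-/

theorem exp_log_sub_log_mul {x c : ℝ} (hx : 0 < x) (hc : 0 < c) :
    exp (log x - log c) * c = x := by
  rw [exp_sub, exp_log hx, exp_log hc, div_mul_cancel₀ x hc.ne']

section Cond

variable {Ω E : Type*} [MeasurableSpace Ω] [NormedAddCommGroup E] {μ : Measure Ω} {s : Set Ω}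

theorem restrict_absolutelyContinuous_cond (hs : μ s ≠ ⊤) : μ.restrict s ≪ μ[|s] :=
  Measure.absolutelyContinuous_smul (ENNReal.inv_ne_zero.2 hs)

theorem integrable_cond_iff (hs₀ : μ s ≠ 0) (hs : μ s ≠ ⊤) {f : Ω → E} :
    Integrable f μ[|s] ↔ IntegrableOn f s μ :=
  integrable_smul_measure (ENNReal.inv_ne_zero.2 hs) (ENNReal.inv_ne_top.2 hs₀)

theorem setIntegral_eq_measureReal_smul_integral_cond [NormedSpace ℝ E] (hs : μ s ≠ ⊤)
    (f : Ω → E) : ∫ ω in s, f ω ∂μ = μ.real s • ∫ ω, f ω ∂μ[|s] := by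
  rcases eq_or_ne (μ s) 0 with hs₀ | hs₀
  · simp [Measure.restrict_eq_zero.2 hs₀, Measure.real, hs₀]
  rw [ProbabilityTheory.cond, integral_smul_measure, smul_smul, ENNReal.toReal_inv, Measure.real,
    mul_inv_cancel₀ (ENNReal.toReal_ne_zero.2 ⟨hs₀, hs⟩), one_smul]

end Cond

section PullOut

variable {Ω : Type*} {m m₀ : MeasurableSpace Ω} {μ : Measure[m₀] Ω} {s : Set Ω} {f g h : Ω → ℝ}

theorem integrable_mul_of_ae_eq_condExp (hf : StronglyMeasurable[m] f)
    (hfg : Integrable (f * g) μ) (hg : Integrable g μ) (hh : h =ᵐ[μ] μ[g | m]) :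
    Integrable (f * h) μ :=
  integrable_condExp.congr <|
    (condExp_mul_of_stronglyMeasurable_left hf hfg hg).trans (.mul .rfl hh.symm)

theorem integral_mul_eq_of_ae_eq_condExp (hm : m ≤ m₀) [SigmaFinite (μ.trim hm)]
    (hf : StronglyMeasurable[m] f) (hfg : Integrable (f * g) μ) (hg : Integrable g μ)
    (hh : h =ᵐ[μ] μ[g | m]) : ∫ ω, (f * g) ω ∂μ = ∫ ω, (f * h) ω ∂μ := by
  rw [← integral_condExp hm]
  exact integral_congr_ae <|
    (condExp_mul_of_stronglyMeasurable_left hf hfg hg).trans (.mul .rfl hh.symm)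

theorem integral_eq_measureReal_of_ae_eq_condExp_indicator [IsFiniteMeasure μ] (hm : m ≤ m₀)
    (hs : MeasurableSet s) (hh : h =ᵐ[μ] μ[s.indicator 1 | m]) :
    ∫ ω, h ω ∂μ = μ.real s := by
  rw [integral_congr_ae hh, integral_condExp hm, integral_indicator_one hs]

theorem setIntegral_eq_integral_mul_of_ae_eq_condExp_indicator [IsFiniteMeasure μ]
    (hm : m ≤ m₀) (hs : MeasurableSet s) (hf : StronglyMeasurable[m] f)
    (hfs : IntegrableOn f s μ) (hh : h =ᵐ[μ] μ[s.indicator 1 | m]) :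
    ∫ ω in s, f ω ∂μ = ∫ ω, f ω * h ω ∂μ := by
  have hfs' : f * s.indicator 1 = s.indicator f := by
    ext ω; by_cases hω : ω ∈ s <;> simp [hω]
  rw [← integral_indicator hs, ← hfs']
  refine integral_mul_eq_of_ae_eq_condExp hm hf ?_ ((integrable_const 1).indicator hs) hh
  rwa [hfs', integrable_indicator_iff hs]

theorem setIntegral_odds_eq_measureReal_compl [IsProbabilityMeasure μ] (hm : m ≤ m₀)
    (hs : MeasurableSet s) {p : Ω → ℝ} (hpm : StronglyMeasurable[m] p)
    (hp : p =ᵐ[μ] μ[s.indicator 1 | m]) (hp₀ : ∀ᵐ ω ∂μ, 0 < p ω)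
    (hint : IntegrableOn (fun ω => (1 - p ω) / p ω) s μ) :
    ∫ ω in s, (1 - p ω) / p ω ∂μ = μ.real sᶜ := by
  have hodds : ∫ ω, (1 - p ω) / p ω * p ω ∂μ = ∫ ω, 1 - p ω ∂μ :=
    integral_congr_ae <| by filter_upwards [hp₀] with ω hω using div_mul_cancel₀ _ hω.ne'
  have hodds_meas : StronglyMeasurable[m] fun ω => (1 - p ω) / p ω :=
    (stronglyMeasurable_const.sub hpm).div hpm
  rw [setIntegral_eq_integral_mul_of_ae_eq_condExp_indicator hm hs hodds_meas hint hp, hodds,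
    integral_sub (integrable_const 1) (integrable_condExp.congr hp.symm),
    integral_eq_measureReal_of_ae_eq_condExp_indicator hm hs hp,
    probReal_compl_eq_one_sub hs, integral_const, probReal_univ, one_smul]

theorem setIntegral_mul_eq_of_ae_eq_condExp_cond [IsFiniteMeasure μ] (hm : m ≤ m₀)
    (hs : μ s ≠ 0) (hf : StronglyMeasurable[m] f) (hfg : IntegrableOn (f * g) s μ)
    (hg : Integrable g μ[|s]) (hh : h =ᵐ[μ[|s]] μ[|s][g | m]) :
    IntegrableOn (f * h) s μ ∧ ∫ ω in s, (f * g) ω ∂μ = ∫ ω in s, (f * h) ω ∂μ := by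
  have hfg' := (integrable_cond_iff hs (measure_ne_top μ s)).2 hfg
  refine ⟨(integrable_cond_iff hs (measure_ne_top μ s)).1 <|
    integrable_mul_of_ae_eq_condExp hf hfg' hg hh, ?_⟩
  rw [setIntegral_eq_measureReal_smul_integral_cond (measure_ne_top μ s),
    setIntegral_eq_measureReal_smul_integral_cond (measure_ne_top μ s),
    integral_mul_eq_of_ae_eq_condExp hm hf hfg' hg hh]

end PullOut

theorem integral_div_sub_one_eq_zero {Ω : Type*} [MeasurableSpace Ω] {μ : Measure Ω}
    [IsProbabilityMeasure μ] {w : Ω → ℝ} {k : ℝ} (hw : Integrable w μ) (hwk : ∫ ω, w ω ∂μ = k)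
    (hk : k ≠ 0) : ∫ ω, (w ω / k - 1) ∂μ = 0 := by
  rw [integral_sub (hw.div_const k) (integrable_const 1), integral_div, hwk, div_self hk,
    integral_const, probReal_univ, one_smul, sub_self]

theorem selection_model_gmm_moment_condition_general
    {Ω : Type*} [MeasurableSpace Ω] {𝒳 : Type*} [MeasurableSpace 𝒳]
    (μ : Measure Ω) [IsProbabilityMeasure μ]
    (X : Ω → 𝒳) (Y : Ω → ℝ) (S : Ω → Bool)
    (hX : Measurable X) (hS : Measurable S)
    (hS1 : 0 < μ {ω | S ω = true}) (hS0 : 0 < μ {ω | S ω = false})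
    (η : ℝ) (q : ℝ → ℝ)
    (c : 𝒳 → ℝ) (hc : Measurable c)
    (hexp_int : Integrable (fun ω => Real.exp (η * q (Y ω))) (μ[|{ω | S ω = true}]))
    (hcver : (fun ω => c (X ω)) =ᵐ[μ[|{ω | S ω = true}]]
      (μ[|{ω | S ω = true}])[fun ω => Real.exp (η * q (Y ω)) |
        MeasurableSpace.comap X inferInstance])
    (hcpos : ∀ᵐ ω ∂(μ[|{ω | S ω = true}]), 0 < c (X ω))
    -- the true propensity, with positivity 0 < p(X) < 1 μ-a.s.
    (p : 𝒳 → ℝ) (hp : Measurable p)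
    (hpver : (fun ω => p (X ω)) =ᵐ[μ]
      μ[fun ω => if S ω then (1 : ℝ) else 0 | MeasurableSpace.comap X inferInstance])
    (hppos : ∀ᵐ ω ∂μ, 0 < p (X ω) ∧ p (X ω) < 1)
    -- the true selection-model offset
    (a : 𝒳 → ℝ)
    (ha : ∀ x, a x = Real.log ((1 - p x) / p x) - Real.log (c x))
    (hwt_int : Integrable (fun ω =>
      if S ω then Real.exp (a (X ω) + η * q (Y ω)) else 0) μ) :
    (∫ ω, (if S ω then Real.exp (a (X ω) + η * q (Y ω)) else 0) ∂μ
        = (μ {ω | S ω = false}).toReal) ∧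
      ∫ ω, ((if S ω then Real.exp (a (X ω) + η * q (Y ω)) else 0)
          / (μ {ω | S ω = false}).toReal - 1) ∂μ = 0 := by
  set T := {ω | S ω = true}
  have hT : MeasurableSet T := hS (measurableSet_singleton true)
  have hw : (fun ω => if S ω then exp (a (X ω) + η * q (Y ω)) else 0)
      = fun ω => T.indicator ((fun ω => exp (a (X ω))) * fun ω => exp (η * q (Y ω))) ω := by
    ext ω; by_cases h : S ω <;> simp [T, h, exp_add]
  have hX_comap : Measurable[MeasurableSpace.comap X inferInstance] X := comap_measurable X
  have hpT : (fun ω => p (X ω)) =ᵐ[μ] μ[T.indicator 1 | MeasurableSpace.comap X inferInstance] := by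
    convert hpver using 3 with ω
    by_cases h : S ω <;> simp [T, h]
  have hoffset : (fun ω => exp (a (X ω))) * (fun ω => c (X ω)) =ᵐ[μ.restrict T]
      fun ω => (1 - p (X ω)) / p (X ω) := by
    filter_upwards [ae_restrict_of_ae hppos,
      (restrict_absolutelyContinuous_cond (measure_ne_top μ T)).ae_le hcpos] with ω ⟨hp₀, hp₁⟩ hc₀
    exact (congrArg (exp · * c (X ω)) (ha _)).trans <|
      exp_log_sub_log_mul (div_pos (sub_pos.2 hp₁) hp₀) hc₀
  obtain ⟨hodds_int, hselected⟩ := setIntegral_mul_eq_of_ae_eq_condExp_cond hX.comap_le hS1.ne'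
    (by rw [funext ha]; fun_prop) ((integrable_indicator_iff hT).1 (hw ▸ hwt_int)) hexp_int hcver
  have hmain : ∫ ω, (if S ω then exp (a (X ω) + η * q (Y ω)) else 0) ∂μ
      = (μ {ω | S ω = false}).toReal := by
    rw [hw, integral_indicator hT, hselected, integral_congr_ae hoffset,
      setIntegral_odds_eq_measureReal_compl hX.comap_le hT (by fun_prop) hpT
        (hppos.mono fun _ h => h.1) (hodds_int.congr_fun_ae hoffset),
      show Tᶜ = {ω | S ω = false} by ext; simp [T]]
    rfl
  exact ⟨hmain, integral_div_sub_one_eq_zero hwt_int hmain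
    (ENNReal.toReal_ne_zero.2 ⟨hS0.ne', measure_ne_top _ _⟩)⟩

/-- The generalized method of moments population equation for the selection-model offset:
with the true offset `a(x) = ln((1 − p(x))/p(x)) − ln c(x)`,
`E_μ[1_{S=1} e^{a(X) + η q(Y)}] = μ(S = 0)`, equivalently
`E_μ[1_{S=1} e^{a(X) + η q(Y)} / μ(S=0) − 1] = 0`. -/
theorem selection_model_gmm_moment_condition
    {Ω : Type*} [MeasurableSpace Ω] {𝒳 : Type*} [MeasurableSpace 𝒳]
    (μ : Measure Ω) [IsProbabilityMeasure μ]
    (X : Ω → 𝒳) (Y : Ω → ℝ) (S : Ω → Bool)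
    (hX : Measurable X) (hY : Measurable Y) (hS : Measurable S)
    (hS1 : 0 < μ {ω | S ω = true}) (hS0 : 0 < μ {ω | S ω = false})
    (η : ℝ) (q : ℝ → ℝ) (hq : Measurable q)
    (c : 𝒳 → ℝ) (hc : Measurable c)
    (hexp_int : Integrable (fun ω => Real.exp (η * q (Y ω))) (μ[|{ω | S ω = true}]))
    (hcver : (fun ω => c (X ω)) =ᵐ[μ[|{ω | S ω = true}]]
      (μ[|{ω | S ω = true}])[fun ω => Real.exp (η * q (Y ω)) |
        MeasurableSpace.comap X inferInstance])
    (hcpos : ∀ᵐ ω ∂(μ[|{ω | S ω = true}]), 0 < c (X ω))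
    -- the true propensity, with positivity 0 < p(X) < 1 μ-a.s.
    (p : 𝒳 → ℝ) (hp : Measurable p)
    (hpver : (fun ω => p (X ω)) =ᵐ[μ]
      μ[fun ω => if S ω then (1 : ℝ) else 0 | MeasurableSpace.comap X inferInstance])
    (hppos : ∀ᵐ ω ∂μ, 0 < p (X ω) ∧ p (X ω) < 1)
    -- the true selection-model offset
    (a : 𝒳 → ℝ)
    (ha : ∀ x, a x = Real.log ((1 - p x) / p x) - Real.log (c x))
    (hwt_int : Integrable (fun ω =>
      if S ω then Real.exp (a (X ω) + η * q (Y ω)) else 0) μ) :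
    (∫ ω, (if S ω then Real.exp (a (X ω) + η * q (Y ω)) else 0) ∂μ
        = (μ {ω | S ω = false}).toReal) ∧
      ∫ ω, ((if S ω then Real.exp (a (X ω) + η * q (Y ω)) else 0)
          / (μ {ω | S ω = false}).toReal - 1) ∂μ = 0 :=
  selection_model_gmm_moment_condition_general μ X Y S hX hS hS1 hS0 η q c hc hexp_int hcver hcpos p
    hp hpver hppos a ha hwt_int
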